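/- If ω is a nondegenerate alternating bilinear form on a 2n-dimensional real vector space V, then the n-fold wedge power ω^n (as an element of the exterior algebra of alternating forms) is nonzero. -/

import Mathlib

/-!
A nondegenerate alternating form admits a Darboux family `e₁, f₁, …, eₙ, fₙ` with `ω(eᵢ, fⱼ) = δᵢⱼ`
and all other pairings zero: pick `ω(x, y) = 1` and recurse on the common kernel of `ω x` and
`ω y`, a complement of codimension two on which `ω` stays nondegenerate. Evaluated on this family,
a summand of `ωⁿ` vanishes unless the permutation maps blocks `{eᵢ, fᵢ}` onto blocks. Such a
permutation is an even permutation of whole blocks composed with swaps inside blocks, and each swap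
flips both the sign of the permutation and one factor of the product, so every nonzero summand
equals `1`. The identity is one of them, hence `ωⁿ(e₁, f₁, …, eₙ, fₙ) > 0`.
-/

open Equiv Finset Module

/-- The `n`-fold wedge power of a bilinear form `ω` on a `2n`-dimensional space,
evaluated on a tuple of `2n` vectors, given by the standard alternating-sum formula
`ωⁿ(v₁,…,v_{2n}) = ∑_{σ} sgn σ ∏_{i<n} ω(v_{σ(2i)}, v_{σ(2i+1)})`
(up to an overall nonzero constant, which does not affect nonvanishing). -/
noncomputable def wedgePowEval {V : Type*} [AddCommGroup V] [Module ℝ V]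
    (ω : V →ₗ[ℝ] V →ₗ[ℝ] ℝ) (n : ℕ) (v : Fin (2 * n) → V) : ℝ :=
  ∑ σ : Equiv.Perm (Fin (2 * n)),
    (Equiv.Perm.sign σ : ℤ) *
      ∏ i : Fin n,
        ω (v (σ ⟨2 * (i : ℕ), by omega⟩)) (v (σ ⟨2 * (i : ℕ) + 1, by omega⟩))

/-- The pairing of the Darboux family, with `(i, 0)` standing for `eᵢ` and `(i, 1)` for `fᵢ`. -/
def symplecticPairing {ι : Type*} [DecidableEq ι] (K : Type*) [Ring K] (p q : ι × Fin 2) : K :=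
  if p.1 = q.1 then ((q.2 : ℕ) : K) - (p.2 : ℕ) else 0

theorem symplecticPairing_perm {ι K : Type*} [DecidableEq ι] [CommRing K] (i : ι)
    (φ : Perm (Fin 2)) : symplecticPairing K (i, φ 0) (i, φ 1) = Perm.sign φ := by
  have : ((φ 1 : ℕ) : ℤ) - (φ 0 : ℕ) = Perm.sign φ := by revert φ; decide
  simp [symplecticPairing, ← this]

namespace LinearMap

variable {K V : Type*} [Field K] [AddCommGroup V] [Module K V] {ω : V →ₗ[K] V →ₗ[K] K}

theorem SeparatingLeft.exists_apply_eq_one (hnd : ω.SeparatingLeft) [Nontrivial V] :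
    ∃ x y, ω x y = 1 := by
  obtain ⟨x, hx⟩ := exists_ne (0 : V)
  obtain ⟨z, hz⟩ : ∃ z, ω x z ≠ 0 := by
    by_contra! h
    exact hx (hnd x h)
  exact ⟨x, (ω x z)⁻¹ • z, by rw [map_smul, smul_eq_mul, inv_mul_cancel₀ hz]⟩

namespace IsAlt

variable {x y : V}

theorem surjective_prod_of_apply_eq_one (hω : ω.IsAlt) (hxy : ω x y = 1) :
    Function.Surjective ((ω x).prod (ω y)) := by
  intro ⟨a, b⟩
  refine ⟨a • y - b • x, ?_⟩
  simp [hω.self_eq_zero, hxy, ← hω.neg x y]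

theorem finrank_ker_prod_add_two [FiniteDimensional K V] (hω : ω.IsAlt) (hxy : ω x y = 1) :
    finrank K (ker ((ω x).prod (ω y))) + 2 = finrank K V := by
  have := ((ω x).prod (ω y)).finrank_range_add_finrank_ker
  rwa [range_eq_top.mpr (hω.surjective_prod_of_apply_eq_one hxy), finrank_top, finrank_prod,
    finrank_self, add_comm] at this

theorem separatingLeft_restrict_ker_prod (hω : ω.IsAlt) (hnd : ω.SeparatingLeft)
    (hxy : ω x y = 1) :
    (ω.compl₁₂ (ker ((ω x).prod (ω y))).subtype
      (ker ((ω x).prod (ω y))).subtype).SeparatingLeft := by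
  rintro ⟨v, hv⟩ hv0
  simp only [mem_ker, prod_apply, Function.prod, Prod.mk_eq_zero] at hv
  ext1
  refine hnd v fun z => ?_
  -- the projection of `z` to the kernel along `span {x, y}`
  have hproj : z - ω x z • y + ω y z • x ∈ ker ((ω x).prod (ω y)) := by
    simp [hω.self_eq_zero, hxy, ← hω.neg x y]
  have := hv0 ⟨_, hproj⟩
  simp only [compl₁₂_apply, Submodule.subtype_apply, map_add, map_sub, map_smul,
    smul_eq_mul] at this
  rw [← hω.neg y v, ← hω.neg x v, hv.1, hv.2] at this
  simpa using this

theorem exists_darboux_family (hω : ω.IsAlt) (hnd : ω.SeparatingLeft) [FiniteDimensional K V]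
    {n : ℕ} (hdim : finrank K V = 2 * n) :
    ∃ u : Fin n × Fin 2 → V, ∀ p q, ω (u p) (u q) = symplecticPairing K p q := by
  induction n generalizing V with
  | zero => exact ⟨fun p => p.1.elim0, fun p => p.1.elim0⟩
  | succ n ih =>
    have : Nontrivial V := Module.nontrivial_of_finrank_pos (R := K) (by omega)
    obtain ⟨x, y, hxy⟩ := hnd.exists_apply_eq_one
    have hWdim := hω.finrank_ker_prod_add_two hxy
    obtain ⟨u, hu⟩ := ih (V := ker ((ω x).prod (ω y))) (fun v => hω v)
      (hω.separatingLeft_restrict_ker_prod hnd hxy) (by omega)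
    have hu' : ∀ p q, ω (u p) (u q) = symplecticPairing K p q := hu
    have hxu : ∀ p, ω x (u p) = 0 ∧ ω y (u p) = 0 := fun p => by
      simpa [Function.prod] using (u p).2
    have hux : ∀ p, ω (u p) x = 0 ∧ ω (u p) y = 0 := by
      simp [← hω.neg _ (u _), hxu]
    refine ⟨fun p => Fin.cases (![x, y] p.2) (fun i => (u (i, p.2) : V)) p.1, ?_⟩
    rintro ⟨i, c⟩ ⟨j, d⟩
    induction i using Fin.cases <;> induction j using Fin.cases <;> fin_cases c <;> fin_cases d <;>
      simp [symplecticPairing, hxy, hω.self_eq_zero, ← hω.neg x y, hxu, hux, hu',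
        (Fin.succ_ne_zero _).symm]

end IsAlt

end LinearMap

namespace Equiv.Perm

theorem exists_eq_prodCongrLeft_mul_prodCongrRight {α β : Type*} [Finite α] [Finite β]
    [Nonempty β] (σ : Perm (α × β)) (h : ∀ a b b', (σ (a, b)).1 = (σ (a, b')).1) :
    ∃ (π : Perm α) (φ : α → Perm β), σ = prodCongrLeft (fun _ => π) * prodCongrRight φ := by
  obtain ⟨b₀⟩ := ‹Nonempty β›
  have hφ (a : α) : Function.Bijective fun b => (σ (a, b)).2 := by
    refine Finite.injective_iff_bijective.mp fun b b' hb => ?_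
    simpa using σ.injective (Prod.ext (h a b b') hb)
  have hπ : Function.Injective fun a => (σ (a, b₀)).1 := by
    intro a a' ha
    obtain ⟨b, hb⟩ := (hφ a).2 (σ (a', b₀)).2
    have := σ.injective (Prod.ext ((h a b b₀).trans ha) hb)
    simpa using congrArg Prod.fst this
  refine ⟨ofBijective _ (Finite.injective_iff_bijective.mp hπ), fun a => ofBijective _ (hφ a), ?_⟩
  ext ⟨a, b⟩ <;> simp [h a b₀ b]

theorem sign_prodCongrLeft_const {α β : Type*} [Fintype α] [DecidableEq α] [Fintype β]
    [DecidableEq β] (π : Perm α) :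
    sign (prodCongrLeft fun _ : β => π) = sign π ^ Fintype.card β := by
  simp [sign_prodCongrLeft]

end Equiv.Perm

section SymplecticPairingSum

variable {ι : Type*} [Fintype ι] [DecidableEq ι]

theorem sign_mul_prod_symplecticPairing_eq_one (π : Perm ι) (φ : ι → Perm (Fin 2)) :
    let σ := prodCongrLeft (fun _ => π) * prodCongrRight φ
    ((Perm.sign σ : ℤ) : ℝ) * ∏ i, symplecticPairing ℝ (σ (i, 0)) (σ (i, 1)) = 1 := by
  simp only [Perm.sign_mul, Perm.sign_prodCongrLeft_const, Fintype.card_fin, Int.units_sq,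
    one_mul, Perm.sign_prodCongrRight, Perm.mul_apply, prodCongrRight_apply, prodCongrLeft_apply,
    symplecticPairing_perm]
  push_cast
  rw [← prod_mul_distrib]
  simp [← Int.cast_mul, ← Units.val_mul, Int.units_mul_self]

theorem sign_mul_prod_symplecticPairing_nonneg (σ : Perm (ι × Fin 2)) :
    0 ≤ ((Perm.sign σ : ℤ) : ℝ) * ∏ i, symplecticPairing ℝ (σ (i, 0)) (σ (i, 1)) := by
  by_cases h : ∀ i, (σ (i, 0)).1 = (σ (i, 1)).1
  · obtain ⟨π, φ, rfl⟩ := σ.exists_eq_prodCongrLeft_mul_prodCongrRight fun i b b' => by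
      fin_cases b <;> fin_cases b' <;> simp [h]
    rw [sign_mul_prod_symplecticPairing_eq_one]
    exact zero_le_one
  · obtain ⟨i, hi⟩ := not_forall.mp h
    rw [prod_eq_zero (mem_univ i) (if_neg hi), mul_zero]

theorem sum_sign_mul_prod_symplecticPairing_pos :
    0 < ∑ σ : Perm (ι × Fin 2),
      ((Perm.sign σ : ℤ) : ℝ) * ∏ i, symplecticPairing ℝ (σ (i, 0)) (σ (i, 1)) := by
  refine sum_pos' (fun σ _ => sign_mul_prod_symplecticPairing_nonneg σ) ⟨1, mem_univ _, ?_⟩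
  simp [symplecticPairing]

end SymplecticPairingSum

def finPairEquiv (n : ℕ) : Fin n × Fin 2 ≃ Fin (2 * n) :=
  finProdFinEquiv.trans (finCongr (Nat.mul_comm n 2))

theorem finPairEquiv_symm_even {n : ℕ} (i : Fin n) (h : 2 * (i : ℕ) < 2 * n) :
    (finPairEquiv n).symm ⟨2 * i, h⟩ = (i, 0) := by
  rw [Equiv.symm_apply_eq]; ext; simp [finPairEquiv, mul_comm]

theorem finPairEquiv_symm_odd {n : ℕ} (i : Fin n) (h : 2 * (i : ℕ) + 1 < 2 * n) :
    (finPairEquiv n).symm ⟨2 * i + 1, h⟩ = (i, 1) := by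
  rw [Equiv.symm_apply_eq]; ext; simp [finPairEquiv, mul_comm, add_comm]

theorem wedgePowEval_comp_finPairEquiv_symm {V : Type*} [AddCommGroup V] [Module ℝ V]
    (ω : V →ₗ[ℝ] V →ₗ[ℝ] ℝ) {n : ℕ} (u : Fin n × Fin 2 → V) :
    wedgePowEval ω n (u ∘ (finPairEquiv n).symm) =
      ∑ σ : Perm (Fin n × Fin 2),
        ((Perm.sign σ : ℤ) : ℝ) * ∏ i, ω (u (σ (i, 0))) (u (σ (i, 1))) := by
  rw [wedgePowEval, ← (finPairEquiv n).permCongr.sum_comp]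
  simp [permCongr_apply, finPairEquiv_symm_even, finPairEquiv_symm_odd]

/-- If `ω` is a nondegenerate alternating bilinear form on a `2n`-dimensional real
vector space `V`, then the top-degree alternating form `ωⁿ` is nonzero. -/
theorem wedge_pow_ne_zero
    (V : Type*) [AddCommGroup V] [Module ℝ V] [FiniteDimensional ℝ V] (n : ℕ)
    (hdim : Module.finrank ℝ V = 2 * n)
    (ω : V →ₗ[ℝ] V →ₗ[ℝ] ℝ)
    (halt : ∀ v : V, ω v v = 0)
    (hnd : ∀ v : V, (∀ w : V, ω v w = 0) → v = 0) :
    ∃ v : Fin (2 * n) → V, wedgePowEval ω n v ≠ 0 := by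
  obtain ⟨u, hu⟩ := LinearMap.IsAlt.exists_darboux_family halt hnd hdim
  refine ⟨u ∘ (finPairEquiv n).symm, ne_of_gt ?_⟩
  simpa only [wedgePowEval_comp_finPairEquiv_symm, hu] using
    sum_sign_mul_prod_symplecticPairing_pos (ι := Fin n)
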